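/- Let N be a nested separation system of a finite graph G. Every N-block b equals V_t for some node t of the structure tree T(N), where V_t = ⋂{A : (A,B) ∈ t}. -/
import Mathlib


open Set

variable {V : Type*}

/-- A separation of a graph `G`: a pair of vertex sets covering `V` such that
every edge lies within one of the sides. -/
def IsSep (G : SimpleGraph V) (p : Set V × Set V) : Prop :=
  p.1 ∪ p.2 = Set.univ ∧
    ∀ x y, G.Adj x y → (x ∈ p.1 ∧ y ∈ p.1) ∨ (x ∈ p.2 ∧ y ∈ p.2)

/-- The partial order on separations: `(A,B) ≤ (C,D)` iff `A ⊆ C` and `B ⊇ D`. -/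
def SepLE (p q : Set V × Set V) : Prop :=
  p.1 ⊆ q.1 ∧ q.2 ⊆ p.2

/-- The inverse of a separation. -/
def flipSep (p : Set V × Set V) : Set V × Set V := (p.2, p.1)

/-- A separation is proper if both sides minus the other are nonempty. -/
def IsProper (p : Set V × Set V) : Prop :=
  (p.1 \ p.2).Nonempty ∧ (p.2 \ p.1).Nonempty

/-- `≤`-comparability of separations. -/
def SepComparable (p q : Set V × Set V) : Prop := SepLE p q ∨ SepLE q p

/-- Two separations are nested if one is comparable with the other or its inverse. -/
def Nested (p q : Set V × Set V) : Prop :=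
  SepComparable p q ∨ SepComparable p (flipSep q)

/-- A separation `(A,B)` separates a vertex set `I` if `I` meets both `A∖B` and `B∖A`. -/
def SepSeparates (p : Set V × Set V) (I : Set V) : Prop :=
  (I ∩ (p.1 \ p.2)).Nonempty ∧ (I ∩ (p.2 \ p.1)).Nonempty

/-- A set is `S`-inseparable if no separation in `S` separates it. -/
def Insep (S : Set (Set V × Set V)) (U : Set V) : Prop :=
  ∀ p ∈ S, ¬ SepSeparates p U

/-- An `S`-block: a maximal `S`-inseparable vertex set. -/
def IsBlock (S : Set (Set V × Set V)) (b : Set V) : Prop :=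
  Insep S b ∧ ∀ b', Insep S b' → b ⊆ b' → b' = b

/-- A separation system: a symmetric set of proper separations. -/
def SepSystem (G : SimpleGraph V) (N : Set (Set V × Set V)) : Prop :=
  (∀ p ∈ N, IsSep G p ∧ IsProper p) ∧ ∀ p ∈ N, flipSep p ∈ N

/-- A nested separation system. -/
def NestedSys (G : SimpleGraph V) (N : Set (Set V × Set V)) : Prop :=
  SepSystem G N ∧ ∀ p ∈ N, ∀ q ∈ N, Nested p q

/-- Strict version of `SepLE`. -/
def SepLT (p q : Set V × Set V) : Prop := SepLE p q ∧ p ≠ q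

/-- `p` is a predecessor of `q` in `(N, ≤)`. -/
def SepPred (N : Set (Set V × Set V)) (p q : Set V × Set V) : Prop :=
  p ∈ N ∧ q ∈ N ∧ SepLT p q ∧ ∀ r ∈ N, ¬ (SepLT p r ∧ SepLT r q)

/-- The relation `∼` on a nested separation system `N`:
`(A,B) ∼ (C,D)` iff they are equal or `(B,A)` is a predecessor of `(C,D)` in `(N,≤)`. -/
def SimRel (N : Set (Set V × Set V)) (p q : Set V × Set V) : Prop :=
  p = q ∨ SepPred N (flipSep p) q

/-- The `∼`-equivalence class of a separation `p ∈ N`. -/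
def classOf (N : Set (Set V × Set V)) (p : Set V × Set V) : Set (Set V × Set V) :=
  {q | q ∈ N ∧ SimRel N p q}

/-- The part `V_t` associated with a node `t` of the structure tree. -/
def Vpart (t : Set (Set V × Set V)) : Set V := {v | ∀ p ∈ t, v ∈ p.1}

/-- The four corner separations of the cross-diagram of two separations. -/
def cornerSep (p q : Set V × Set V) : Fin 4 → Set V × Set V :=
  ![(p.1 ∩ q.1, p.2 ∪ q.2), (p.1 ∩ q.2, p.2 ∪ q.1),
    (p.2 ∩ q.1, p.1 ∪ q.2), (p.2 ∩ q.2, p.1 ∪ q.1)]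

/-- `p` weakly separates `I₁` and `I₂`. -/
def WeaklySep (p : Set V × Set V) (I₁ I₂ : Set V) : Prop :=
  (I₁ ⊆ p.1 ∧ I₂ ⊆ p.2) ∨ (I₁ ⊆ p.2 ∧ I₂ ⊆ p.1)

/-- `S` separates the collection `I` well. -/
def SeparatesWell (S : Set (Set V × Set V)) (I : Set (Set V)) : Prop :=
  ∀ p ∈ S, ∀ q ∈ S, ¬ Nested p q →
    ∀ I₁ ∈ I, ∀ I₂ ∈ I, I₁ ⊆ p.1 ∩ q.1 → I₂ ⊆ p.2 ∩ q.2 →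
      ∃ r ∈ S, I₁ ⊆ r.1 ∧ r.1 ⊆ p.1 ∩ q.1 ∧ p.2 ∪ q.2 ⊆ r.2

/-- An extremal separation of a separation system `S`. -/
def Extremal (S : Set (Set V × Set V)) (p : Set V × Set V) : Prop :=
  ∀ q ∈ S, SepLE p q ∨ SepLE p (flipSep q)

/-- A tight separation: every vertex of the separator has neighbours on both sides. -/
def Tight (G : SimpleGraph V) (p : Set V × Set V) : Prop :=
  ∀ v ∈ p.1 ∩ p.2, (∃ x ∈ p.1 \ p.2, G.Adj v x) ∧ ∃ y ∈ p.2 \ p.1, G.Adj v y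

lemma sepLE_trans' {p q r : Set V × Set V} (h1 : SepLE p q) (h2 : SepLE q r) : SepLE p r :=
  ⟨h1.1.trans h2.1, h2.2.trans h1.2⟩

lemma sepLE_antisymm' {p q : Set V × Set V} (h1 : SepLE p q) (h2 : SepLE q p) : p = q :=
  Prod.ext (h1.1.antisymm h2.1) (h2.2.antisymm h1.2)

lemma sepLT_trans_le' {p q r : Set V × Set V} (h1 : SepLT p q) (h2 : SepLE q r) :
    SepLT p r := by
  refine ⟨sepLE_trans' h1.1 h2, ?_⟩
  rintro rfl
  exact h1.2 (sepLE_antisymm' h1.1 h2)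

lemma sepLE_flip' {p q : Set V × Set V} (h : SepLE p q) : SepLE (flipSep q) (flipSep p) :=
  ⟨h.2, h.1⟩

lemma sepLT_wf' [Fintype V] : WellFounded (fun p q : Set V × Set V => SepLT p q) := by
  have ht : IsTrans (Set V × Set V) (fun p q => SepLT p q) :=
    ⟨fun a b c hab hbc => sepLT_trans_le' hab hbc.1⟩
  have hi : IsIrrefl (Set V × Set V) (fun p q => SepLT p q) := ⟨fun a h => h.2 rfl⟩
  exact Finite.wellFounded_of_trans_of_irrefl _

/-- Every `N`-block equals `V_t` for some node `t` of the structure tree. -/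
theorem block_is_vpart [Fintype V] (G : SimpleGraph V) (N : Set (Set V × Set V))
    (hN : NestedSys G N) (hne : N.Nonempty) (b : Set V) (hb : IsBlock N b) :
    ∃ t : Set (Set V × Set V), (∃ p ∈ N, t = classOf N p) ∧ b = Vpart t := by
  obtain ⟨⟨hsep, hsym⟩, hnest⟩ := hN
  -- b lies on one side of every separation in N
  have hside : ∀ p ∈ N, b ⊆ p.1 ∨ b ⊆ p.2 := by
    intro p hp
    have hcov := (hsep p hp).1.1
    have hins := hb.1 p hp
    by_contra h
    push_neg at h
    obtain ⟨h1, h2⟩ := h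
    obtain ⟨x, hxb, hx1⟩ := not_subset.mp h1
    obtain ⟨y, hyb, hy2⟩ := not_subset.mp h2
    have hx2 : x ∈ p.2 := by
      have : x ∈ p.1 ∪ p.2 := hcov ▸ mem_univ x
      exact this.resolve_left hx1
    have hy1 : y ∈ p.1 := by
      have : y ∈ p.1 ∪ p.2 := hcov ▸ mem_univ y
      exact this.resolve_right hy2
    exact hins ⟨⟨y, hyb, hy1, hy2⟩, ⟨x, hxb, hx2, hx1⟩⟩
  -- the set of separations with b on the first side
  set S : Set (Set V × Set V) := {p | p ∈ N ∧ b ⊆ p.1} with hS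
  have hSne : S.Nonempty := by
    obtain ⟨p, hp⟩ := hne
    rcases hside p hp with h | h
    · exact ⟨p, hp, h⟩
    · exact ⟨flipSep p, hsym p hp, h⟩
  obtain ⟨p0, hp0S, hmin⟩ := (sepLT_wf').has_min S hSne
  obtain ⟨hp0N, hp0b⟩ := hp0S
  -- every member of the class of p0 has b on its first side
  have hclass_sub : ∀ q ∈ classOf N p0, b ⊆ q.1 := by
    rintro q ⟨hqN, hsim⟩
    rcases hsim with rfl | hpred
    · exact hp0b
    · rcases hside q hqN with h | h
      · exact h
      · exfalso
        obtain ⟨_, _, hlt, _⟩ := hpred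
        have hle : SepLE (flipSep q) p0 := sepLE_flip' hlt.1
        have hne' : flipSep q ≠ p0 := by
          intro heq
          apply hlt.2
          rw [← heq]
          rfl
        exact hmin (flipSep q) ⟨hsym q hqN, h⟩ ⟨hle, hne'⟩
  -- minimal successors of flip p0 below a given r belong to the class
  have hsucc : ∀ r ∈ N, SepLT (flipSep p0) r → ∃ q ∈ classOf N p0, SepLE q r := by
    intro r hrN hrlt
    set T : Set (Set V × Set V) := {q | q ∈ N ∧ SepLT (flipSep p0) q ∧ SepLE q r} with hT
    have hTne : T.Nonempty := ⟨r, hrN, hrlt, ⟨subset_rfl, subset_rfl⟩⟩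
    obtain ⟨q, ⟨hqN, hqlt, hqle⟩, hqmin⟩ := (sepLT_wf').has_min T hTne
    refine ⟨q, ⟨hqN, Or.inr ⟨hsym p0 hp0N, hqN, hqlt, ?_⟩⟩, hqle⟩
    rintro s hsN ⟨hs1, hs2⟩
    exact hqmin s ⟨hsN, hs1, sepLE_trans' hs2.1 hqle⟩ hs2
  set W : Set V := Vpart (classOf N p0) with hW
  have hp0class : p0 ∈ classOf N p0 := ⟨hp0N, Or.inl rfl⟩
  have hW0 : W ⊆ p0.1 := fun v hv => hv p0 hp0class
  have hbW : b ⊆ W := fun v hv q hq => hclass_sub q hq hv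
  -- W is on one side of every separation in N
  have hWside : ∀ p ∈ N, W ⊆ p.1 ∨ W ⊆ p.2 := by
    intro p hp
    rcases hnest p0 hp0N p hp with (hle | hle) | (hle | hle)
    · exact Or.inl (hW0.trans hle.1)
    · -- SepLE p p0, so flip p0 ≤ flip p
      by_cases heq : p = p0
      · exact Or.inl (heq ▸ hW0)
      · have hlt : SepLT (flipSep p0) (flipSep p) := by
          refine ⟨sepLE_flip' hle, fun h => heq ?_⟩
          have := congrArg flipSep h
          simpa [flipSep] using this.symm
        obtain ⟨q, hqc, hqle⟩ := hsucc (flipSep p) (hsym p hp) hlt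
        exact Or.inr (fun v hv => hqle.1 (hv q hqc))
    · exact Or.inr (hW0.trans hle.1)
    · -- SepLE (flip p) p0, so flip p0 ≤ p
      by_cases heq : p = flipSep p0
      · refine Or.inr ?_
        rw [heq]
        exact hW0
      · have hlt : SepLT (flipSep p0) p := by
          refine ⟨?_, fun h => heq h.symm⟩
          have := sepLE_flip' hle
          simpa [flipSep] using this
        obtain ⟨q, hqc, hqle⟩ := hsucc p hp hlt
        exact Or.inl (fun v hv => hqle.1 (hv q hqc))
  have hWinsep : Insep N W := by
    intro p hp hsepW
    obtain ⟨⟨x, hxW, hx1, hx2⟩, ⟨y, hyW, hy2, hy1⟩⟩ := hsepW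
    rcases hWside p hp with h | h
    · exact hy1 (h hyW)
    · exact hx2 (h hxW)
  have hWb : W = b := hb.2 W hWinsep hbW
  exact ⟨classOf N p0, ⟨p0, hp0N, rfl⟩, hWb.symm⟩
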